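/- arXiv:1210.3922 — 6 statements merged into one kernel-verified Lean document; each statement's English description precedes it below -/
import Mathlib

section
/- Let R be a fusion ring with basis B and regular element r = Σ_{b∈B} FPdim(b)·b in R ⊗ ℝ. Then r² = FPdim(R)·r, where FPdim(R) = Σ_{b∈B} FPdim(b)². -/
open Finset

/-- A fusion ring with distinguished basis indexed by `ι`: nonnegative integer structure
constants `N`, unit basis element `one`, involution `star`, and the Frobenius–Perron
dimension `fp`, the (unique) ring homomorphism to `ℝ` positive on the basis. -/
structure FusionRing (ι : Type) [Fintype ι] [DecidableEq ι] where
  N : ι → ι → ι → ℕ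
  one : ι
  star : ι → ι
  assoc : ∀ a b c d, ∑ x, N a b x * N x c d = ∑ x, N b c x * N a x d
  one_mul : ∀ a b, N one a b = if a = b then 1 else 0
  mul_one : ∀ a b, N a one b = if a = b then 1 else 0
  star_invol : ∀ a, star (star a) = a
  N_one : ∀ a b, N a b one = if b = star a then 1 else 0
  N_star : ∀ a b c, N a b c = N (star b) (star a) (star c)
  fp : ι → ℝ
  fp_pos : ∀ a, 0 < fp a
  fp_one : fp one = 1
  fp_hom : ∀ a b, fp a * fp b = ∑ c, (N a b c : ℝ) * fp c

namespace FusionRing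

variable {ι : Type} [Fintype ι] [DecidableEq ι] (R : FusionRing ι)

set_option linter.unusedVariables false
open scoped Classical

/-- Multiplication of `R ⊗ ℝ`, written on coefficient vectors in the basis `ι`. -/
noncomputable def mul (x y : ι → ℝ) : ι → ℝ :=
  fun c => ∑ a, ∑ b, x a * y b * (R.N a b c : ℝ)

/-- The basis element `a` viewed as a coefficient vector. -/
def e (R : FusionRing ι) (a : ι) : ι → ℝ := fun c => if c = a then 1 else 0

/-- The linear extension of the involution `*`. -/
def starVec (x : ι → ℝ) : ι → ℝ := fun c => x (R.star c)

/-- The standard bilinear form, `m(a,b) = δ_{a,b}` on basis elements. -/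
def m (R : FusionRing ι) (x y : ι → ℝ) : ℝ := ∑ a, x a * y a

/-- `S` is the basis of a fusion subring: contains the unit, closed under `*`, and closed
under taking constituents of products. -/
def IsFusionSubset (S : Finset ι) : Prop :=
  R.one ∈ S ∧ (∀ a ∈ S, R.star a ∈ S) ∧ ∀ a ∈ S, ∀ b ∈ S, ∀ c, 0 < R.N a b c → c ∈ S

/-- The regular element `R_S = ∑_{d ∈ S} FPdim(d)·d` of a fusion subset `S`. -/
def reg (S : Finset ι) : ι → ℝ := fun c => if c ∈ S then R.fp c else 0

/-- `FPdim(S) = ∑_{d ∈ S} FPdim(d)²`. -/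
def fpdimS (S : Finset ι) : ℝ := ∑ d ∈ S, R.fp d ^ 2

/-- The double coset relation relative to fusion subsets `S`, `T`:
`X ∼ Y` iff `Y` occurs with positive multiplicity in `D·X·E` for some `D ∈ S`, `E ∈ T`. -/
def dcRel (S T : Finset ι) (X Y : ι) : Prop :=
  ∃ D ∈ S, ∃ E ∈ T, 0 < ∑ a, R.N D X a * R.N a E Y

/-- `A_i = ∑_{Y ∈ Λ_i} FPdim(Y)·Y` where `Λ_i` is the double coset of `X`. -/
noncomputable def classVec (S T : Finset ι) (X : ι) : ι → ℝ :=
  fun c => if R.dcRel S T X c then R.fp c else 0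

end FusionRing

section AuxRegularSq

open Finset

variable {ι : Type} [Fintype ι] [DecidableEq ι] (R : FusionRing ι)

lemma FusionRing.frob_aux (a b c : ι) : R.N a b (R.star c) = R.N b c (R.star a) := by
  have h := R.assoc a b c R.one
  have hc : ∀ x : ι, (c = R.star x) = (x = R.star c) := by
    intro x
    apply propext
    constructor
    · rintro rfl; exact (R.star_invol x).symm
    · rintro rfl; exact (R.star_invol c).symm
  have ha : ∀ x : ι, (x = R.star a) = (x = R.star a) := fun _ => rfl
  simp only [R.N_one, hc, mul_ite, mul_one, mul_zero, Finset.sum_ite_eq',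
    Finset.mem_univ, if_true] at h
  simpa using h

lemma FusionRing.frob (a b c : ι) : R.N a b c = R.N c (R.star b) a := by
  have h1 : R.N a b c = R.N b (R.star c) (R.star a) := by
    have := R.frob_aux a b (R.star c)
    rwa [R.star_invol] at this
  rw [h1, R.N_star]
  rw [R.star_invol, R.star_invol]

lemma FusionRing.sum_fp_N (b c : ι) :
    ∑ a, R.fp a * (R.N a b c : ℝ) = R.fp c * R.fp (R.star b) := by
  rw [R.fp_hom]
  apply Finset.sum_congr rfl
  intro a _
  rw [R.frob a b c, mul_comm]

end AuxRegularSq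


/-- The regular element `r = ∑_b FPdim(b)·b` of a fusion ring satisfies
`r² = FPdim(R)·r` where `FPdim(R) = ∑_b FPdim(b)²`. -/
theorem regular_sq {ι : Type} [Fintype ι] [DecidableEq ι] (R : FusionRing ι)
    (r : ι → ℝ) (hr : r = fun b => R.fp b) :
    R.mul r r = (∑ b, R.fp b ^ 2) • r := by
  subst hr
  have S1pos : (0:ℝ) < ∑ b, R.fp b ^ 2 :=
    Finset.sum_pos (fun i _ => pow_pos (R.fp_pos i) 2) ⟨R.one, Finset.mem_univ _⟩
  -- step 1 : mul r r c = fp c * S2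
  have key : ∀ c, R.mul (fun b => R.fp b) (fun b => R.fp b) c
      = R.fp c * ∑ b, R.fp b * R.fp (R.star b) := by
    intro c
    unfold FusionRing.mul
    rw [Finset.sum_comm]
    rw [Finset.mul_sum]
    apply Finset.sum_congr rfl
    intro b _
    have : ∑ a, R.fp a * R.fp b * (R.N a b c : ℝ)
        = R.fp b * ∑ a, R.fp a * (R.N a b c : ℝ) := by
      rw [Finset.mul_sum]; apply Finset.sum_congr rfl; intro a _; ring
    rw [this, R.sum_fp_N]; ring
  -- step 2 : S2 = S1
  have hS : (∑ b, R.fp b * R.fp (R.star b)) = ∑ b, R.fp b ^ 2 := by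
    have h1 : ∑ c, R.fp c * (R.mul (fun b => R.fp b) (fun b => R.fp b) c)
        = (∑ b, R.fp b ^ 2) * (∑ b, R.fp b ^ 2) := by
      unfold FusionRing.mul
      simp only [Finset.mul_sum]
      rw [Finset.sum_comm]
      have inner : ∀ a : ι, ∑ c, ∑ b, R.fp c * (R.fp a * R.fp b * (R.N a b c : ℝ))
          = R.fp a ^ 2 * ∑ b, R.fp b ^ 2 := by
        intro a
        rw [Finset.sum_comm, Finset.mul_sum]
        apply Finset.sum_congr rfl
        intro b _
        have : ∑ c, R.fp c * (R.fp a * R.fp b * (R.N a b c : ℝ))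
            = R.fp a * R.fp b * ∑ c, (R.N a b c : ℝ) * R.fp c := by
          rw [Finset.mul_sum]
          apply Finset.sum_congr rfl; intro c _; ring
        rw [this, ← R.fp_hom]; ring
      simp only [inner]
      apply Finset.sum_congr rfl
      intro i _; ring
    have h2 : ∑ c, R.fp c * (R.mul (fun b => R.fp b) (fun b => R.fp b) c)
        = (∑ b, R.fp b ^ 2) * (∑ b, R.fp b * R.fp (R.star b)) := by
      simp only [key]
      rw [Finset.sum_mul]
      apply Finset.sum_congr rfl
      intro c _; ring
    have := h1.symm.trans h2
    exact (mul_left_cancel₀ (ne_of_gt S1pos) this).symm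
  funext c
  rw [key c, hS]
  simp [mul_comm]
end

section
/- Let R be a fusion ring with basis B, and let S, T ⊆ B be fusion subsets (i.e., bases of fusion subrings, closed under * and containing 1, with products of elements of S supported on S). Define X ∼ Y for X, Y ∈ B iff there exist D ∈ S and E ∈ T such that Y occurs with positive multiplicity in D·X·E. Then ∼ is an equivalence relation on B. -/
open Finset

namespace FusionRing

variable {ι : Type} [Fintype ι] [DecidableEq ι] (R : FusionRing ι)

set_option linter.unusedVariables false
open scoped Classical

private lemma exists_pos_of_sum_pos {f g : ι → ℕ} (h : 0 < ∑ a, f a * g a) :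
    ∃ a, 0 < f a ∧ 0 < g a := by
  by_contra hc
  push_neg at hc
  have hz : ∑ a, f a * g a = 0 := Finset.sum_eq_zero (fun a _ => by
    rcases Nat.eq_zero_or_pos (f a) with h0 | h0
    · simp [h0]
    · have hg0 : g a = 0 := Nat.le_zero.mp (hc a h0)
      simp [hg0])
  omega

private lemma sum_pos_of_term {f g : ι → ℕ} (a : ι) (hf : 0 < f a) (hg : 0 < g a) :
    0 < ∑ b, f b * g b :=
  lt_of_lt_of_le (Nat.mul_pos hf hg)
    (Finset.single_le_sum (f := fun b => f b * g b) (fun _ _ => Nat.zero_le _)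
      (Finset.mem_univ a))

private lemma N_FA (a b c : ι) : R.N a b (R.star c) = R.N b c (R.star a) := by
  have h := R.assoc a b c R.one
  simp only [R.N_one, mul_ite, Nat.mul_one, Nat.mul_zero] at h
  have hl : ∀ x, (if c = R.star x then R.N a b x else 0)
      = (if x = R.star c then R.N a b x else 0) := by
    intro x
    by_cases hx : x = R.star c
    · subst hx; simp [R.star_invol]
    · have hnc : c ≠ R.star x := fun hcc => hx (by rw [hcc, R.star_invol])
      simp [hx, hnc]
  rw [Finset.sum_congr rfl (fun x _ => hl x)] at h
  simpa [Finset.sum_ite_eq'] using h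

private lemma N_F1 (a b c : ι) : R.N a b c = R.N b (R.star c) (R.star a) := by
  have := R.N_FA a b (R.star c)
  rwa [R.star_invol] at this

private lemma N_right (a b c : ι) : R.N c (R.star b) a = R.N a b c := by
  have h1 : R.N c (R.star b) a = R.N b (R.star c) (R.star a) := by
    rw [R.N_star c (R.star b) a, R.star_invol]
  rw [h1, ← R.N_F1]

private lemma N_left (a b c : ι) : R.N (R.star a) c b = R.N a b c := by
  have h1 : R.N (R.star a) c b = R.N c (R.star b) a := by
    rw [R.N_F1 (R.star a) c b, R.star_invol]
  rw [h1, R.N_right]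

end FusionRing

/-- The double coset relation relative to two fusion subsets `S`, `T` of the basis of a
fusion ring (`X ∼ Y` iff `Y` occurs in `D·X·E` for some `D ∈ S`, `E ∈ T`) is an
equivalence relation. -/
theorem dcRel_equivalence {ι : Type} [Fintype ι] [DecidableEq ι] (R : FusionRing ι)
    (S T : Finset ι) (hS : R.IsFusionSubset S) (hT : R.IsFusionSubset T) :
    Equivalence (R.dcRel S T) := by
  constructor
  · -- reflexivity
    intro X
    refine ⟨R.one, hS.1, R.one, hT.1, ?_⟩
    refine FusionRing.sum_pos_of_term (f := fun a => R.N R.one X a)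
      (g := fun a => R.N a R.one X) X ?_ ?_
    · simp [R.one_mul]
    · simp [R.mul_one]
  · -- symmetry
    rintro X Y ⟨D, hD, E, hE, hpos⟩
    obtain ⟨a, h1, h2⟩ := FusionRing.exists_pos_of_sum_pos hpos
    refine ⟨R.star D, hS.2.1 D hD, R.star E, hT.2.1 E hE, ?_⟩
    rw [R.assoc (R.star D) Y (R.star E) X]
    refine FusionRing.sum_pos_of_term (f := fun x => R.N Y (R.star E) x)
      (g := fun x => R.N (R.star D) x X) a ?_ ?_
    · show 0 < R.N Y (R.star E) a
      rw [R.N_right a E Y]; exact h2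
    · show 0 < R.N (R.star D) a X
      rw [R.N_left D X a]; exact h1
  · -- transitivity
    rintro X Y Z ⟨D, hD, E, hE, hp1⟩ ⟨D', hD', E', hE', hp2⟩
    obtain ⟨f0, hDXf0, hf0EY⟩ := FusionRing.exists_pos_of_sum_pos hp1
    obtain ⟨a0, hD'Ya0, ha0E'Z⟩ := FusionRing.exists_pos_of_sum_pos hp2
    -- step 1: some g with N D' f0 g > 0 and N g E a0 > 0
    have s1 : 0 < ∑ x, R.N D' f0 x * R.N x E a0 := by
      rw [R.assoc D' f0 E a0]
      exact FusionRing.sum_pos_of_term Y hf0EY hD'Ya0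
    obtain ⟨g, hg1, hg2⟩ := FusionRing.exists_pos_of_sum_pos s1
    -- step 2: some f ∈ S with N f X g > 0
    have s2 : 0 < ∑ x, R.N D' D x * R.N x X g := by
      rw [R.assoc D' D X g]
      exact FusionRing.sum_pos_of_term f0 hDXf0 hg1
    obtain ⟨f, hf1, hf2⟩ := FusionRing.exists_pos_of_sum_pos s2
    have hfS : f ∈ S := hS.2.2 D' hD' D hD f hf1
    -- step 3: some h ∈ T with N g h Z > 0
    have s3 : 0 < ∑ x, R.N E E' x * R.N g x Z := by
      rw [← R.assoc g E E' Z]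
      exact FusionRing.sum_pos_of_term a0 hg2 ha0E'Z
    obtain ⟨h, hh1, hh2⟩ := FusionRing.exists_pos_of_sum_pos s3
    have hhT : h ∈ T := hT.2.2 E hE E' hE' h hh1
    exact ⟨f, hfS, h, hhT, FusionRing.sum_pos_of_term g hf2 hh2⟩
end

section
/- Let F : C → D be a monoidal functor between rigid monoidal categories that admits a right adjoint R. Then for all objects X in C and Y in D there is an isomorphism X ⊗ R(Y) ≅ R(F(X) ⊗ Y) (the projection formula). -/
open CategoryTheory MonoidalCategory Functor.LaxMonoidal Functor.OplaxMonoidal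

/-- A monoidal functor sends exact pairings to exact pairings. -/
noncomputable def mapExactPairing {C D : Type*} [Category C] [Category D]
    [MonoidalCategory C] [MonoidalCategory D] (F : C ⥤ D) [F.Monoidal]
    (X Y : C) [ExactPairing X Y] : ExactPairing (F.obj X) (F.obj Y) where
  coevaluation' := ε F ≫ F.map (η_ X Y) ≫ δ F X Y
  evaluation' := μ F Y X ≫ F.map (ε_ X Y) ≫ η F
  coevaluation_evaluation' := by
    have h := ExactPairing.coevaluation_evaluation X Y
    have hc : (ρ_ Y).inv ≫ Y ◁ η_ X Y ≫ (α_ Y X Y).inv ≫ ε_ X Y ▷ Y ≫ (λ_ Y).hom = 𝟙 Y := by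
      rw [reassoc_of% h]; simp
    have e1 : F.obj Y ◁ ε F ≫ μ F Y (𝟙_ C) = (ρ_ (F.obj Y)).hom ≫ F.map (ρ_ Y).inv := by
      rw [Functor.LaxMonoidal.right_unitality]
      simp [← F.map_comp]
    have e2 : F.obj Y ◁ F.map (η_ X Y) =
        μ F Y (𝟙_ C) ≫ F.map (Y ◁ η_ X Y) ≫ δ F Y (X ⊗ Y) := by
      rw [← Functor.LaxMonoidal.μ_natural_right_assoc]
      simp
    have e3 : δ F (𝟙_ C) Y ≫ η F ▷ F.obj Y = F.map (λ_ Y).hom ≫ (λ_ (F.obj Y)).inv := by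
      rw [Functor.OplaxMonoidal.left_unitality]
      simp [← F.map_comp_assoc]
    simp only [MonoidalCategory.whiskerLeft_comp, MonoidalCategory.comp_whiskerRight,
      Category.assoc]
    rw [e2]
    simp only [Category.assoc]
    rw [Functor.OplaxMonoidal.associativity_inv_assoc,
      Functor.Monoidal.whiskerRight_δ_μ_assoc,
      Functor.OplaxMonoidal.δ_natural_left_assoc, e3, reassoc_of% e1]
    simp only [← F.map_comp_assoc]
    rw [hc]
    simp
  evaluation_coevaluation' := by
    have h := ExactPairing.evaluation_coevaluation X Y
    have hc : (λ_ X).inv ≫ η_ X Y ▷ X ≫ (α_ X Y X).hom ≫ X ◁ ε_ X Y ≫ (ρ_ X).hom = 𝟙 X := by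
      rw [reassoc_of% h]; simp
    have e1 : ε F ▷ F.obj X ≫ μ F (𝟙_ C) X = (λ_ (F.obj X)).hom ≫ F.map (λ_ X).inv := by
      rw [Functor.LaxMonoidal.left_unitality]
      simp [← F.map_comp]
    have e2 : F.map (η_ X Y) ▷ F.obj X =
        μ F (𝟙_ C) X ≫ F.map (η_ X Y ▷ X) ≫ δ F (X ⊗ Y) X := by
      rw [← Functor.LaxMonoidal.μ_natural_left_assoc]
      simp
    have e3 : δ F X (𝟙_ C) ≫ F.obj X ◁ η F = F.map (ρ_ X).hom ≫ (ρ_ (F.obj X)).inv := by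
      rw [Functor.OplaxMonoidal.right_unitality]
      simp [← F.map_comp_assoc]
    simp only [MonoidalCategory.whiskerLeft_comp, MonoidalCategory.comp_whiskerRight,
      Category.assoc]
    rw [e2]
    simp only [Category.assoc]
    rw [Functor.OplaxMonoidal.associativity_assoc,
      Functor.Monoidal.whiskerLeft_δ_μ_assoc,
      Functor.OplaxMonoidal.δ_natural_right_assoc, e3, reassoc_of% e1]
    simp only [← F.map_comp_assoc]
    rw [hc]
    simp

open ExactPairing in
/-- The projection formula: if `F : C ⥤ D` is a monoidal functor between rigid monoidal
categories admitting a right adjoint `R`, then `X ⊗ R(Y) ≅ R(F(X) ⊗ Y)` for all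
`X : C`, `Y : D`. -/
theorem projection_formula {C D : Type*} [Category C] [Category D]
    [MonoidalCategory C] [MonoidalCategory D] [RigidCategory C] [RigidCategory D]
    (F : C ⥤ D) [F.Monoidal] (R : D ⥤ C) (adj : F ⊣ R)
    (X : C) (Y : D) :
    Nonempty (X ⊗ R.obj Y ≅ R.obj (F.obj X ⊗ Y)) := by
  haveI : ExactPairing (F.obj X) (F.obj Xᘁ) := mapExactPairing F X Xᘁ
  have adj1 : (tensorLeft Xᘁ ⋙ F) ⊣ (R ⋙ tensorLeft X) :=
    (tensorLeftAdjunction X Xᘁ).comp adj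
  have i : (F ⋙ tensorLeft (F.obj Xᘁ)) ≅ (tensorLeft Xᘁ ⋙ F) :=
    NatIso.ofComponents (fun Z => Functor.Monoidal.μIso F Xᘁ Z)
      (fun f => by simp)
  have adj2 : (tensorLeft Xᘁ ⋙ F) ⊣ (tensorLeft (F.obj X) ⋙ R) :=
    (adj.comp (tensorLeftAdjunction (F.obj X) (F.obj Xᘁ))).ofNatIsoLeft i
  exact ⟨(adj1.rightAdjointUniq adj2).app Y⟩
end

section
/- Let G be a finite group and H ≤ G a subgroup, over an algebraically closed field k of characteristic zero. The restriction functor Res : Rep(G) → Rep(H) is 'normal' — i.e., for every irreducible representation V of G, if the trivial representation of H occurs in Res V then Res V is a direct sum of copies of the trivial representation of H — if and only if H is a normal subgroup of G. -/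
/-!
If `H` is normal, the `H`-fixed vectors of a `G`-representation form a subrepresentation, so in an
irreducible one they are either `0` or everything.

Conversely, let `W = k[G ⧸ H]` be the permutation representation and `v` the basis vector of the
coset `H`. Since `v` is `H`-fixed and generates `W`, its component in any irreducible direct summand
`σ` of `W` is a nonzero `H`-fixed vector, so by hypothesis `H` acts trivially on `σ`, and then so
does its normal closure. By Maschke's theorem every proper subrepresentation of `W` misses some
irreducible summand, so the normal closure of `H` fixes all of `W`, in particular `v`; that is, it
lies in the stabilizer `H` of the coset `H`.
-/

open CategoryTheory

universe u v

theorem eq_top_of_forall_isAtom_le {α : Type*} [Lattice α] [BoundedOrder α]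
    [ComplementedLattice α] [IsAtomic α] {t : α} (h : ∀ a, IsAtom a → a ≤ t) : t = ⊤ := by
  obtain ⟨c, hc⟩ := exists_isCompl t
  obtain rfl | ⟨a, ha, hac⟩ := eq_bot_or_exists_atom_le c
  · exact eq_top_of_isCompl_bot hc
  · exact (ha.1 (le_bot_iff.1 (hc.disjoint (h a ha) hac))).elim

namespace Subrepresentation

variable {k G W : Type*} [Field k] [Monoid G] [AddCommGroup W] [Module k W]
  {ρ : Representation k G W}

@[simp]
theorem mem_bot {w : W} : w ∈ (⊥ : Subrepresentation ρ) ↔ w = 0 :=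
  Submodule.mem_bot k

@[simp]
theorem mem_top (w : W) : w ∈ (⊤ : Subrepresentation ρ) :=
  Submodule.mem_top

theorem eq_bot_iff (σ : Subrepresentation ρ) : σ = ⊥ ↔ ∀ w ∈ σ, w = 0 := by
  rw [← toSubmodule_injective.eq_iff]
  exact Submodule.eq_bot_iff _

theorem eq_top_iff' (σ : Subrepresentation ρ) : σ = ⊤ ↔ ∀ w, w ∈ σ := by
  rw [← toSubmodule_injective.eq_iff]
  exact Submodule.eq_top_iff'

theorem toSubmodule_strictMono :
    StrictMono (toSubmodule : Subrepresentation ρ → Submodule k W) :=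
  fun _ _ h => h

instance [FiniteDimensional k W] : WellFoundedLT (Subrepresentation ρ) :=
  toSubmodule_strictMono.wellFoundedLT

def mapSubtype (σ : Subrepresentation ρ) (τ : Subrepresentation σ.toRepresentation) :
    Subrepresentation ρ where
  toSubmodule := τ.toSubmodule.map σ.toSubmodule.subtype
  apply_mem_toSubmodule g := by
    rintro _ ⟨x, hx, rfl⟩
    exact ⟨_, τ.apply_mem_toSubmodule g hx, rfl⟩

theorem mapSubtype_le (σ : Subrepresentation ρ)
    (τ : Subrepresentation σ.toRepresentation) : σ.mapSubtype τ ≤ σ := by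
  rintro _ ⟨x, -, rfl⟩
  exact x.2

theorem isIrreducible_toRepresentation {σ : Subrepresentation ρ} (hσ : IsAtom σ) :
    σ.toRepresentation.IsIrreducible := by
  obtain ⟨w, hw, hw0⟩ : ∃ w ∈ σ, w ≠ 0 := by
    by_contra! h
    exact hσ.1 ((eq_bot_iff σ).2 h)
  have : Nontrivial (Subrepresentation σ.toRepresentation) :=
    ⟨⊥, ⊤, fun h => hw0 <| congrArg Subtype.val <|
      (mem_bot (ρ := σ.toRepresentation)).1 (h ▸ mem_top (⟨w, hw⟩ : σ.toSubmodule))⟩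
  refine ⟨fun τ => (hσ.le_iff.1 (mapSubtype_le σ τ)).imp (fun h => ?_) (fun h => ?_)⟩
  · refine (eq_bot_iff τ).2 fun x hx => Subtype.ext ?_
    exact (eq_bot_iff _).1 h _ ⟨x, hx, rfl⟩
  · refine (eq_top_iff' τ).2 fun x => ?_
    obtain ⟨y, hy, hyx⟩ : (x : W) ∈ σ.mapSubtype τ := h.symm ▸ x.2
    exact Subtype.ext hyx ▸ hy

theorem exists_mem_ne_zero_of_isCompl {σ τ : Subrepresentation ρ} (h : IsCompl σ τ) {v : W}
    (hv : v ∉ τ) : ∃ w ∈ σ, w ≠ 0 ∧ ∀ g, ρ g v = v → ρ g w = w := by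
  have hv' : v ∈ σ ⊔ τ := h.sup_eq_top ▸ mem_top v
  obtain ⟨w, hw, t, ht, rfl⟩ := Submodule.mem_sup.1 hv'
  refine ⟨w, hw, fun hw0 => hv (show w + t ∈ τ.toSubmodule by simpa [hw0] using ht),
    fun g hg => ?_⟩
  have hmem : ρ g w - w ∈ σ ⊓ τ := by
    refine ⟨σ.toSubmodule.sub_mem (σ.apply_mem_toSubmodule g hw) hw, ?_⟩
    have : ρ g w - w = -(ρ g t - t) := by
      rw [map_add] at hg
      linear_combination (norm := module) hg
    rw [this]
    exact τ.toSubmodule.neg_mem (τ.toSubmodule.sub_mem (τ.apply_mem_toSubmodule g ht) ht)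
  rwa [h.inf_eq_bot, mem_bot, sub_eq_zero] at hmem

end Subrepresentation

namespace Representation

variable {k G W : Type*} [Field k] [Group G] [AddCommGroup W] [Module k W]

noncomputable def invariantsSubrepresentation (ρ : Representation k G W) (N : Subgroup G)
    [N.Normal] : Subrepresentation ρ where
  toSubmodule := invariants (ρ.comp N.subtype)
  apply_mem_toSubmodule g _ hv := le_comap_invariants ρ N g hv

theorem mem_invariantsSubrepresentation {ρ : Representation k G W} {N : Subgroup G} [N.Normal]
    {w : W} : w ∈ ρ.invariantsSubrepresentation N ↔ ∀ n ∈ N, ρ n w = w := by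
  show w ∈ invariants _ ↔ _
  simp [mem_invariants]

theorem le_invariantsSubrepresentation_normalClosure {ρ : Representation k G W}
    {H : Subgroup G} {σ : Subrepresentation ρ} (hσ : ∀ w ∈ σ, ∀ h ∈ H, ρ h w = w) :
    σ ≤ ρ.invariantsSubrepresentation (Subgroup.normalClosure H) := by
  have hker : Subgroup.normalClosure (H : Set G) ≤ σ.toRepresentation.ker :=
    Subgroup.normalClosure_le_normal fun h hh =>
      LinearMap.ext fun w => Subtype.ext (hσ w w.2 h hh)
  intro w hw
  exact mem_invariantsSubrepresentation.2 fun n hn =>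
    congrArg Subtype.val congr($(hker hn) ⟨w, hw⟩)

theorem ofMulAction_single_eq_iff {X : Type*} [MulAction G X] (g : G) (x : X) :
    ofMulAction k G X g (MonoidAlgebra.single x 1) = MonoidAlgebra.single x 1 ↔
      g ∈ MulAction.stabilizer G x := by
  rw [ofMulAction_single, MonoidAlgebra.single_left_inj one_ne_zero, MulAction.mem_stabilizer_iff]

theorem eq_top_of_single_mem {X : Type*} [MulAction G X] [MulAction.IsPretransitive G X]
    {σ : Subrepresentation (ofMulAction k G X)} {x : X} (hx : MonoidAlgebra.single x 1 ∈ σ) :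
    σ = ⊤ := by
  refine (Subrepresentation.eq_top_iff' σ).2 fun w => ?_
  induction w using MonoidAlgebra.induction_linear with
  | zero => exact σ.toSubmodule.zero_mem
  | add _ _ h₁ h₂ => exact σ.toSubmodule.add_mem h₁ h₂
  | single y r =>
    obtain ⟨g, rfl⟩ := MulAction.exists_smul_eq G x y
    have : MonoidAlgebra.single (g • x) r =
        r • ofMulAction k G X g (MonoidAlgebra.single x 1) := by
      simp
    rw [this]
    exact σ.toSubmodule.smul_mem r (σ.apply_mem_toSubmodule g hx)

end Representation

namespace FDRep

variable {k : Type u} {G : Type v} [Field k] [Monoid G]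

theorem injective_of_mono {X Y : FDRep k G} (f : X ⟶ Y) [Mono f] : Function.Injective f :=
  (Rep.mono_iff_injective ((forget₂ (FDRep k G) (Rep k G)).map f)).1 inferInstance

theorem apply_ρ {X Y : FDRep k G} (f : X ⟶ Y) (g : G) (x : X) : f (X.ρ g x) = Y.ρ g (f x) :=
  congr($(f.comm g).hom x)

theorem hom_eq_zero_iff {X Y : FDRep k G} (f : X ⟶ Y) : f = 0 ↔ ∀ x, f x = 0 :=
  ⟨fun h x => h ▸ rfl, fun h => by ext x; exact h x⟩

noncomputable def subrepresentationι (V : FDRep k G) (σ : Subrepresentation V.ρ) :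
    FDRep.of σ.toRepresentation ⟶ V where
  hom := FGModuleCat.ofHom σ.toSubmodule.subtype
  comm _ := rfl

instance (V : FDRep k G) (σ : Subrepresentation V.ρ) : Mono (V.subrepresentationι σ) :=
  ConcreteCategory.mono_of_injective _ Subtype.val_injective

noncomputable def rangeSubrepresentation {X Y : FDRep k G} (f : X ⟶ Y) :
    Subrepresentation Y.ρ where
  toSubmodule := LinearMap.range f.hom.hom.hom
  apply_mem_toSubmodule g := by
    rintro _ ⟨x, rfl⟩
    exact ⟨X.ρ g x, apply_ρ f g x⟩

theorem simple_iff_isIrreducible (V : FDRep k G) :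
    Simple V ↔ Representation.IsIrreducible V.ρ := by
  constructor
  · intro hV
    have : Nontrivial (Subrepresentation V.ρ) := ⟨⊥, ⊤, fun h =>
      id_nonzero V <| (hom_eq_zero_iff _).2 fun v =>
        Subrepresentation.mem_bot.1 (by rw [h]; exact Subrepresentation.mem_top v)⟩
    refine ⟨fun σ => or_iff_not_imp_left.2 fun hσ => ?_⟩
    have hι : V.subrepresentationι σ ≠ 0 := by
      rw [Ne, hom_eq_zero_iff]
      contrapose! hσ
      exact (Subrepresentation.eq_bot_iff σ).2 fun w hw => hσ ⟨w, hw⟩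
    have := (Simple.mono_isIso_iff_nonzero _).2 hι
    refine (Subrepresentation.eq_top_iff' σ).2 fun w => ?_
    obtain ⟨x, rfl⟩ := ((ConcreteCategory.isIso_iff_bijective _).1 this).2 w
    exact x.2
  · intro hV
    refine ⟨fun {Y} f _ => ⟨fun hf h0 => (bot_ne_top : (⊥ : Subrepresentation V.ρ) ≠ ⊤) ?_,
      fun hf => ?_⟩⟩
    · refine ((Subrepresentation.eq_bot_iff ⊤).2 fun w _ => ?_).symm
      obtain ⟨y, rfl⟩ := ((ConcreteCategory.isIso_iff_bijective _).1 hf).2 w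
      rw [h0]
      rfl
    · have hrange : rangeSubrepresentation f = ⊤ := by
        refine (eq_bot_or_eq_top _).resolve_left fun h => hf ((hom_eq_zero_iff f).2 fun y => ?_)
        exact (Subrepresentation.eq_bot_iff _).1 h _ ⟨y, rfl⟩
      refine (ConcreteCategory.isIso_iff_bijective f).2 ⟨injective_of_mono f, fun w => ?_⟩
      exact (Subrepresentation.eq_top_iff' _).1 hrange w

end FDRep

namespace Subgroup

open Representation

/-- The restriction functor `Rep(G) → Rep(H)` is *normal*. -/
def HasNormalRestriction (k : Type u) [Field k] {G : Type v} [Group G] (H : Subgroup G) : Prop :=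
  ∀ V : FDRep k G, Simple V → (∃ v : V, v ≠ 0 ∧ ∀ h ∈ H, V.ρ h v = v) →
    ∀ v : V, ∀ h ∈ H, V.ρ h v = v

theorem Normal.hasNormalRestriction {k : Type u} [Field k] {G : Type v} [Group G]
    {H : Subgroup G} (hH : H.Normal) : H.HasNormalRestriction k := by
  rintro V hV ⟨v, hv0, hv⟩ w h hh
  have hne : invariantsSubrepresentation V.ρ H ≠ ⊥ := fun h0 =>
    hv0 ((Subrepresentation.eq_bot_iff _).1 h0 v (mem_invariantsSubrepresentation.2 hv))
  have htop := (((FDRep.simple_iff_isIrreducible V).1 hV).eq_bot_or_eq_top _).resolve_left hne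
  exact mem_invariantsSubrepresentation.1 (htop ▸ Subrepresentation.mem_top w) h hh

variable {k G : Type u} [Field k] [Group G] [Finite G] [NeZero (Nat.card G : k)] {H : Subgroup G}

theorem HasNormalRestriction.forall_apply_eq_of_isAtom (hres : H.HasNormalRestriction k)
    {W : Type u} [AddCommGroup W] [Module k W] [FiniteDimensional k W]
    {ρ : Representation k G W} {v : W} (hv : ∀ h ∈ H, ρ h v = v)
    (hgen : ∀ τ : Subrepresentation ρ, v ∈ τ → τ = ⊤) {σ : Subrepresentation ρ} (hσ : IsAtom σ) :
    ∀ w ∈ σ, ∀ h ∈ H, ρ h w = w := by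
  obtain ⟨τ, hστ⟩ := exists_isCompl σ
  have hvτ : v ∉ τ := fun hvτ => hσ.1 (eq_bot_of_isCompl_top (hgen τ hvτ ▸ hστ))
  -- the `σ`-component of `v`
  obtain ⟨w₀, hw₀σ, hw₀, hw₀fix⟩ := Subrepresentation.exists_mem_ne_zero_of_isCompl hστ hvτ
  have hsimple : Simple (FDRep.of σ.toRepresentation) :=
    (FDRep.simple_iff_isIrreducible _).2 (Subrepresentation.isIrreducible_toRepresentation hσ)
  intro w hw h hh
  refine congrArg Subtype.val (hres _ hsimple ⟨⟨w₀, hw₀σ⟩, ?_, ?_⟩ ⟨w, hw⟩ h hh)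
  · exact fun h0 => hw₀ (congrArg Subtype.val h0)
  · exact fun h hh => Subtype.ext (hw₀fix h (hv h hh))

theorem HasNormalRestriction.normal (hres : H.HasNormalRestriction k) : H.Normal := by
  let ρ := ofMulAction k G (G ⧸ H)
  let v := MonoidAlgebra.single ((1 : G) : G ⧸ H) (1 : k)
  have hv : ∀ h ∈ H, ρ h v = v := fun h hh =>
    (ofMulAction_single_eq_iff h _).2 (by rwa [MulAction.stabilizer_quotient])
  have htop : ρ.invariantsSubrepresentation (normalClosure H) = ⊤ :=
    eq_top_of_forall_isAtom_le fun σ hσ =>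
      le_invariantsSubrepresentation_normalClosure <|
        hres.forall_apply_eq_of_isAtom hv (fun _ => eq_top_of_single_mem) hσ
  have hle : normalClosure (H : Set G) ≤ H := fun n hn => by
    have := mem_invariantsSubrepresentation.1 (htop ▸ Subrepresentation.mem_top v) n hn
    rwa [ofMulAction_single_eq_iff, MulAction.stabilizer_quotient] at this
  rw [← le_antisymm hle le_normalClosure]
  infer_instance

end Subgroup

/-- For a finite group `G` and a subgroup `H`, the restriction functor
`Rep(G) → Rep(H)` is normal — i.e. for every irreducible representation `V` of `G`, if
the trivial representation of `H` occurs in `Res V` (there is a nonzero `H`-fixed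
vector) then `Res V` is a direct sum of copies of the trivial representation of `H`
(every vector is `H`-fixed) — if and only if `H` is a normal subgroup of `G`. -/
theorem res_normal_iff_normal {G : Type} [Group G] [Fintype G] (H : Subgroup G) :
    (∀ V : FDRep ℂ G, Simple V →
        (∃ v : V, v ≠ 0 ∧ ∀ h ∈ H, V.ρ h v = v) →
        (∀ v : V, ∀ h ∈ H, V.ρ h v = v)) ↔ H.Normal :=
  ⟨Subgroup.HasNormalRestriction.normal, Subgroup.Normal.hasNormalRestriction⟩
end

section
/- Let G be a finite group, H a normal subgroup, and V, W irreducible complex representations of G. If Hom_H(Res_H V, Res_H W) ≠ 0, then Res_H V / dim V and Res_H W / dim W have the same character on H; i.e., χ_V(h)/χ_V(1) = χ_W(h)/χ_W(1) for all h ∈ H. -/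
/-!
The operator `∑_{g ∈ G} ρ(g h g⁻¹)` commutes with `G`, so on an irreducible `U` it is, by Schur's
lemma, a scalar; comparing traces identifies that scalar as `|G| χ_U(h) / χ_U(1)`. For `h ∈ H`
all conjugates `g h g⁻¹` lie in the normal subgroup `H`, so a nonzero `H`-equivariant map
`f : V → W` intertwines the two operators, forcing the two scalars to coincide.
-/

open CategoryTheory

namespace FDRep

variable {k G : Type*} [Field k] [Group G]

theorem nontrivial_of_simple (U : FDRep k G) [Simple U] : Nontrivial U := by
  by_contra hU
  rw [not_nontrivial_iff_subsingleton] at hU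
  apply id_nonzero U
  ext v
  exact Subsingleton.elim _ _

theorem exists_eq_smul_id_of_commute [IsAlgClosed k] (U : FDRep k G) [Simple U]
    (T : U →ₗ[k] U) (hT : ∀ g, Commute (U.ρ g) T) : ∃ c : k, T = c • LinearMap.id := by
  let φ : U ⟶ U := ⟨FGModuleCat.ofHom T, fun g => by
    ext v
    exact (LinearMap.congr_fun (hT g) v).symm⟩
  obtain ⟨c, hc⟩ := endomorphism_simple_eq_smul_id k φ
  exact ⟨c, congrArg (fun ψ : U ⟶ U => ψ.hom.hom.hom) hc.symm⟩

variable [Fintype G]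

noncomputable def conjSum (U : FDRep k G) (h : G) : U →ₗ[k] U :=
  ∑ g : G, U.ρ (g * h * g⁻¹)

theorem commute_conjSum (U : FDRep k G) (h x : G) : Commute (U.ρ x) (conjSum U h) := by
  rw [Commute, SemiconjBy, conjSum, Finset.sum_mul, Finset.mul_sum]
  refine Fintype.sum_equiv (Equiv.mulLeft x) _ _ fun g => ?_
  simp only [Equiv.coe_mulLeft, ← map_mul]
  congr 1
  group

theorem trace_conjSum (U : FDRep k G) (h : G) :
    LinearMap.trace k U (conjSum U h) = Fintype.card G * U.character h := by
  rw [conjSum, map_sum]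
  change ∑ g, U.character (g * h * g⁻¹) = _
  simp only [char_conj, Finset.sum_const, Finset.card_univ, nsmul_eq_mul]

theorem conjSum_eq_smul_id [IsAlgClosed k] [CharZero k] (U : FDRep k G) [Simple U] (h : G) :
    conjSum U h = (Fintype.card G * U.character h / U.character 1) • LinearMap.id := by
  obtain ⟨c, hc⟩ := exists_eq_smul_id_of_commute U (conjSum U h) (commute_conjSum U h)
  have := nontrivial_of_simple U
  have hdim : U.character 1 ≠ 0 := by simp [char_one, Module.finrank_pos.ne']
  rw [← trace_conjSum, hc, map_smul, LinearMap.trace_id, ← char_one, smul_eq_mul,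
    mul_div_cancel_right₀ _ hdim]

theorem comp_conjSum_eq_conjSum_comp {V W : FDRep k G} (H : Subgroup G) [H.Normal]
    (f : V →ₗ[k] W) (hf : ∀ h ∈ H, ∀ v : V, f (V.ρ h v) = W.ρ h (f v)) {h : G} (hh : h ∈ H) :
    f ∘ₗ conjSum V h = conjSum W h ∘ₗ f := by
  ext v
  simp only [conjSum, LinearMap.comp_apply, LinearMap.sum_apply, map_sum]
  exact Finset.sum_congr rfl fun g _ => hf _ (Subgroup.Normal.conj_mem ‹_› h hh g) v

end FDRep

open FDRep in
/-- Let `G` be a finite group, `H` a normal subgroup, and `V`, `W` irreducible complex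
representations of `G`. If there is a nonzero `H`-equivariant linear map
`Res_H V → Res_H W`, then the normalized restricted characters agree:
`χ_V(h)/χ_V(1) = χ_W(h)/χ_W(1)` for all `h ∈ H`. -/
theorem clifford_normalized_characters {G : Type} [Group G] [Fintype G]
    (H : Subgroup G) [H.Normal]
    (V W : FDRep ℂ G) [Simple V] [Simple W]
    (f : V →ₗ[ℂ] W) (hf : f ≠ 0)
    (hequiv : ∀ h ∈ H, ∀ v : V, f (V.ρ h v) = W.ρ h (f v)) :
    ∀ h ∈ H, V.character h / V.character 1 = W.character h / W.character 1 := by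
  intro h hh
  have hcomm := comp_conjSum_eq_conjSum_comp H f hequiv hh
  rw [conjSum_eq_smul_id V h, conjSum_eq_smul_id W h, LinearMap.comp_smul, LinearMap.smul_comp,
    LinearMap.comp_id, LinearMap.id_comp] at hcomm
  have hscalar := smul_left_injective ℂ hf hcomm
  rw [mul_div_assoc, mul_div_assoc] at hscalar
  exact mul_left_cancel₀ (Nat.cast_ne_zero.mpr Fintype.card_ne_zero) hscalar
end

section
/- Let R be a fusion ring with commutative multiplication and S ⊆ B a fusion subset. Define rad(S) = { X ∈ B : X^n has all its constituents in S for some n ≥ 1 }. Then rad(S) is a fusion subset of B (contains 1, is closed under *, and products of its elements have constituents in rad(S)). -/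
open Finset

namespace FusionRing

/-- Powers of an element of `R ⊗ ℝ`. -/
noncomputable def pow {ι : Type} [Fintype ι] [DecidableEq ι] (R : FusionRing ι)
    (x : ι → ℝ) : ℕ → (ι → ℝ)
  | 0 => R.e R.one
  | n + 1 => R.mul x (R.pow x n)

end FusionRing

namespace FusionRing

set_option linter.unusedSectionVars false
set_option linter.unusedVariables false
open scoped Classical

variable {ι : Type} [Fintype ι] [DecidableEq ι] (R : FusionRing ι)

private lemma key_assoc (a b c d : ι) :
    ∑ x, (R.N a b x : ℝ) * R.N x c d = ∑ x, (R.N b c x : ℝ) * R.N a x d := by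
  have h := R.assoc a b c d
  exact_mod_cast h

private lemma swap3 (f : ι → ι → ι → ℝ) :
    (∑ p, ∑ a, ∑ a', f p a a') = ∑ a, ∑ a', ∑ p, f p a a' := by
  rw [Finset.sum_comm]
  exact Finset.sum_congr rfl fun a _ => Finset.sum_comm

private lemma swap4 (f : ι → ι → ι → ι → ℝ) :
    (∑ p, ∑ b, ∑ a, ∑ a', f p b a a') = ∑ a, ∑ a', ∑ b, ∑ p, f p b a a' := by
  rw [Finset.sum_comm]
  calc (∑ b, ∑ p, ∑ a, ∑ a', f p b a a')
      = ∑ b, ∑ a, ∑ a', ∑ p, f p b a a' :=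
        Finset.sum_congr rfl fun b _ => swap3 _
    _ = ∑ a, ∑ b, ∑ a', ∑ p, f p b a a' := Finset.sum_comm
    _ = ∑ a, ∑ a', ∑ b, ∑ p, f p b a a' :=
        Finset.sum_congr rfl fun a _ => Finset.sum_comm

private lemma mul_assoc3 (x y z : ι → ℝ) :
    R.mul (R.mul x y) z = R.mul x (R.mul y z) := by
  funext c
  have L : R.mul (R.mul x y) z c
      = ∑ a, ∑ a', ∑ b, (x a * y a' * z b) * ∑ p, (R.N a a' p : ℝ) * R.N p b c := by
    show (∑ p, ∑ b, (∑ a, ∑ a', x a * y a' * (R.N a a' p : ℝ)) * z b * (R.N p b c : ℝ)) = _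
    simp only [Finset.sum_mul]
    rw [swap4 (fun p b a a' => x a * y a' * (R.N a a' p : ℝ) * z b * (R.N p b c : ℝ))]
    refine Finset.sum_congr rfl fun a _ => Finset.sum_congr rfl fun a' _ =>
      Finset.sum_congr rfl fun b _ => ?_
    rw [Finset.mul_sum]
    exact Finset.sum_congr rfl fun p _ => by ring
  have Rr : R.mul x (R.mul y z) c
      = ∑ a, ∑ a', ∑ b, (x a * y a' * z b) * ∑ p, (R.N a' b p : ℝ) * R.N a p c := by
    show (∑ a, ∑ q, x a * (∑ a', ∑ b, y a' * z b * (R.N a' b q : ℝ)) * (R.N a q c : ℝ)) = _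
    refine Finset.sum_congr rfl fun a _ => ?_
    simp only [Finset.mul_sum, Finset.sum_mul]
    rw [swap3 (fun q a' b => x a * (y a' * z b * (R.N a' b q : ℝ)) * (R.N a q c : ℝ))]
    refine Finset.sum_congr rfl fun a' _ => Finset.sum_congr rfl fun b _ => ?_
    exact Finset.sum_congr rfl fun p _ => by ring
  rw [L, Rr]
  exact Finset.sum_congr rfl fun a _ => Finset.sum_congr rfl fun a' _ =>
    Finset.sum_congr rfl fun b _ => by rw [key_assoc]

private lemma mul_comm3 (hcomm : ∀ a b c, R.N a b c = R.N b a c) (x y : ι → ℝ) :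
    R.mul x y = R.mul y x := by
  funext c
  show (∑ a, ∑ b, x a * y b * (R.N a b c : ℝ)) = ∑ a, ∑ b, y a * x b * (R.N a b c : ℝ)
  rw [Finset.sum_comm]
  exact Finset.sum_congr rfl fun b _ => Finset.sum_congr rfl fun a _ => by
    rw [hcomm]; ring

private lemma one_mul3 (x : ι → ℝ) : R.mul (R.e R.one) x = x := by
  funext c
  show (∑ a, ∑ b, (if a = R.one then (1:ℝ) else 0) * x b * (R.N a b c : ℝ)) = x c
  rw [Finset.sum_eq_single R.one]
  · simp [R.one_mul]
  · intro a _ ha; simp [ha]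
  · intro h; exact absurd (Finset.mem_univ _) h

private lemma pow_add3 (x : ι → ℝ) (m n : ℕ) :
    R.pow x (m + n) = R.mul (R.pow x m) (R.pow x n) := by
  induction m with
  | zero =>
      rw [Nat.zero_add]
      show R.pow x n = R.mul (R.e R.one) (R.pow x n)
      rw [one_mul3]
  | succ m ih =>
      have h : m + 1 + n = (m + n) + 1 := by omega
      rw [h]
      show R.mul x (R.pow x (m + n)) = _
      rw [ih, ← mul_assoc3]
      rfl

private lemma pow_mul3 (x : ι → ℝ) (m k : ℕ) :
    R.pow x (m * k) = R.pow (R.pow x m) k := by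
  induction k with
  | zero => rw [Nat.mul_zero]; rfl
  | succ k ih =>
      have h : m * (k + 1) = m + m * k := by ring
      rw [h, pow_add3, ih]
      rfl

private lemma mul_mul_mul (hcomm : ∀ a b c, R.N a b c = R.N b a c) (a b c d : ι → ℝ) :
    R.mul (R.mul a b) (R.mul c d) = R.mul (R.mul a c) (R.mul b d) :=
  calc R.mul (R.mul a b) (R.mul c d)
      = R.mul a (R.mul b (R.mul c d)) := mul_assoc3 R a b _
    _ = R.mul a (R.mul (R.mul b c) d) := by rw [mul_assoc3]
    _ = R.mul a (R.mul (R.mul c b) d) := by rw [mul_comm3 R hcomm b c]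
    _ = R.mul a (R.mul c (R.mul b d)) := by rw [mul_assoc3]
    _ = R.mul (R.mul a c) (R.mul b d) := (mul_assoc3 R a c _).symm

private lemma pow_mul_pow (hcomm : ∀ a b c, R.N a b c = R.N b a c) (x y : ι → ℝ) (n : ℕ) :
    R.pow (R.mul x y) n = R.mul (R.pow x n) (R.pow y n) := by
  induction n with
  | zero =>
      show R.e R.one = R.mul (R.e R.one) (R.e R.one)
      rw [one_mul3]
  | succ n ih =>
      show R.mul (R.mul x y) (R.pow (R.mul x y) n) = _
      rw [ih, mul_mul_mul R hcomm]
      rfl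

private lemma mul_nonneg3 {x y : ι → ℝ} (hx : ∀ i, 0 ≤ x i) (hy : ∀ i, 0 ≤ y i) :
    ∀ c, 0 ≤ R.mul x y c := fun c =>
  Finset.sum_nonneg fun a _ => Finset.sum_nonneg fun b _ =>
    mul_nonneg (mul_nonneg (hx a) (hy b)) (Nat.cast_nonneg _)

private lemma pow_nonneg3 {x : ι → ℝ} (hx : ∀ i, 0 ≤ x i) (n : ℕ) :
    ∀ c, 0 ≤ R.pow x n c := by
  induction n with
  | zero => intro c; show (0:ℝ) ≤ if c = R.one then 1 else 0; split <;> norm_num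
  | succ n ih => exact mul_nonneg3 R hx ih

private lemma mul_mono3 {x y x' y' : ι → ℝ} (hx : ∀ i, 0 ≤ x i) (hy : ∀ i, 0 ≤ y i)
    (hxx : ∀ i, x i ≤ x' i) (hyy : ∀ i, y i ≤ y' i) :
    ∀ c, R.mul x y c ≤ R.mul x' y' c := fun c =>
  Finset.sum_le_sum fun a _ => Finset.sum_le_sum fun b _ =>
    mul_le_mul_of_nonneg_right
      (mul_le_mul (hxx a) (hyy b) (hy b) ((hx a).trans (hxx a))) (Nat.cast_nonneg _)

private lemma pow_mono3 {x y : ι → ℝ} (hx : ∀ i, 0 ≤ x i) (hxy : ∀ i, x i ≤ y i) (n : ℕ) :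
    ∀ c, R.pow x n c ≤ R.pow y n c := by
  induction n with
  | zero => intro c; exact le_refl _
  | succ n ih => exact mul_mono3 R hx (pow_nonneg3 R hx n) hxy ih

private lemma pow_smul3 (r : ℝ) (x : ι → ℝ) (n : ℕ) :
    R.pow (fun i => r * x i) n = fun c => r ^ n * R.pow x n c := by
  induction n with
  | zero => funext c; show R.e R.one c = r ^ 0 * R.e R.one c; rw [pow_zero, _root_.one_mul]
  | succ n ih =>
      have h : R.pow (fun i => r * x i) (n + 1)
          = R.mul (fun i => r * x i) (fun c => r ^ n * R.pow x n c) := by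
        rw [← ih]; rfl
      rw [h]
      funext c
      show (∑ a, ∑ b, (r * x a) * (r ^ n * R.pow x n b) * (R.N a b c : ℝ))
          = r ^ (n + 1) * ∑ a, ∑ b, x a * R.pow x n b * (R.N a b c : ℝ)
      rw [Finset.mul_sum]
      refine Finset.sum_congr rfl fun a _ => ?_
      rw [Finset.mul_sum]
      exact Finset.sum_congr rfl fun b _ => by ring

private lemma supp_mul3 (S : Finset ι) (hS : R.IsFusionSubset S) {x y : ι → ℝ}
    (hx0 : ∀ i, 0 ≤ x i) (hy0 : ∀ i, 0 ≤ y i)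
    (hx : ∀ i, x i ≠ 0 → i ∈ S) (hy : ∀ i, y i ≠ 0 → i ∈ S) :
    ∀ c, R.mul x y c ≠ 0 → c ∈ S := by
  intro c hc
  by_contra hcS
  apply hc
  refine Finset.sum_eq_zero fun a _ => Finset.sum_eq_zero fun b _ => ?_
  by_cases hxa : x a = 0
  · simp [hxa]
  by_cases hyb : y b = 0
  · simp [hyb]
  have hN : R.N a b c = 0 := by
    by_contra hNne
    exact hcS (hS.2.2 a (hx a hxa) b (hy b hyb) c (Nat.pos_of_ne_zero hNne))
  simp [hN]

private lemma supp_pow3 (S : Finset ι) (hS : R.IsFusionSubset S) {x : ι → ℝ}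
    (hx0 : ∀ i, 0 ≤ x i) (hx : ∀ i, x i ≠ 0 → i ∈ S) (n : ℕ) :
    ∀ c, R.pow x n c ≠ 0 → c ∈ S := by
  induction n with
  | zero =>
      intro c hc
      have hco : c = R.one := by
        by_contra h
        exact hc (if_neg h)
      rw [hco]; exact hS.1
  | succ n ih => exact supp_mul3 R S hS hx0 (pow_nonneg3 R hx0 n) hx ih

private lemma star_one3 : R.star R.one = R.one := by
  have h := (R.one_mul (R.star R.one) R.one).symm.trans (R.N_one R.one (R.star R.one))
  by_contra hne
  simp [hne] at h

private lemma N_star_star (hcomm : ∀ a b c, R.N a b c = R.N b a c) (a b c : ι) :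
    R.N (R.star a) (R.star b) c = R.N a b (R.star c) := by
  rw [R.N_star (R.star a) (R.star b) c, R.star_invol, R.star_invol]
  exact hcomm b a _

/-- The involution as an equiv. -/
private def starEquiv : ι ≃ ι := ⟨R.star, R.star, R.star_invol, R.star_invol⟩

private lemma starEquiv_apply (a : ι) : R.starEquiv a = R.star a := rfl

private lemma starVec_mul (hcomm : ∀ a b c, R.N a b c = R.N b a c) (x y : ι → ℝ) :
    R.mul (R.starVec x) (R.starVec y) = R.starVec (R.mul x y) := by
  funext c
  show (∑ a, ∑ b, x (R.star a) * y (R.star b) * (R.N a b c : ℝ))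
      = ∑ a, ∑ b, x a * y b * (R.N a b (R.star c) : ℝ)
  symm
  refine Fintype.sum_equiv R.starEquiv _ _ fun a => ?_
  refine Fintype.sum_equiv R.starEquiv _ _ fun b => ?_
  simp only [starEquiv_apply]
  rw [R.star_invol, R.star_invol, N_star_star R hcomm]

private lemma starVec_e (a : ι) : R.starVec (R.e a) = R.e (R.star a) := by
  funext c
  show (if R.star c = a then (1:ℝ) else 0) = if c = R.star a then 1 else 0
  by_cases h : c = R.star a
  · rw [if_pos h, if_pos (by rw [h, R.star_invol])]
  · rw [if_neg h, if_neg (fun hh => h (by rw [← hh, R.star_invol]))]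

private lemma pow_star3 (hcomm : ∀ a b c, R.N a b c = R.N b a c) (a : ι) (n : ℕ) :
    R.pow (R.e (R.star a)) n = R.starVec (R.pow (R.e a) n) := by
  induction n with
  | zero =>
      show R.e R.one = R.starVec (R.e R.one)
      rw [starVec_e, star_one3]
  | succ n ih =>
      show R.mul (R.e (R.star a)) (R.pow (R.e (R.star a)) n) = _
      rw [ih, ← starVec_e, starVec_mul R hcomm]
      rfl

private lemma mul_e_e (a b : ι) : R.mul (R.e a) (R.e b) = fun c => (R.N a b c : ℝ) := by
  funext c
  show (∑ p, ∑ q, (if p = a then (1:ℝ) else 0) * (if q = b then 1 else 0) * (R.N p q c : ℝ))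
      = (R.N a b c : ℝ)
  rw [Finset.sum_eq_single a]
  · rw [Finset.sum_eq_single b]
    · simp
    · intro q _ hq; simp [hq]
    · intro h; exact absurd (Finset.mem_univ _) h
  · intro p _ hp; simp [hp]
  · intro h; exact absurd (Finset.mem_univ _) h

end FusionRing

/-- In a commutative fusion ring, the radical
`rad(S) = { X ∈ B : X^n has all constituents in S for some n ≥ 1 }` of a fusion subset
`S` is itself a fusion subset: it contains the unit, is closed under the involution, and
is closed under taking constituents of products. -/
theorem radical_isFusionSubset {ι : Type} [Fintype ι] [DecidableEq ι] (R : FusionRing ι)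
    (hcomm : ∀ a b c, R.N a b c = R.N b a c)
    (S : Finset ι) (hS : R.IsFusionSubset S)
    (rad : Set ι)
    (hrad : rad = { X : ι | ∃ n ≥ 1, ∀ c, R.pow (R.e X) n c ≠ 0 → c ∈ S }) :
    R.one ∈ rad ∧ (∀ a ∈ rad, R.star a ∈ rad) ∧
      ∀ a ∈ rad, ∀ b ∈ rad, ∀ c, 0 < R.N a b c → c ∈ rad := by
  classical
  subst hrad
  have he_nonneg : ∀ a : ι, ∀ i, (0:ℝ) ≤ R.e a i := by
    intro a i
    show (0:ℝ) ≤ if i = a then 1 else 0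
    split <;> norm_num
  refine ⟨?_, ?_, ?_⟩
  · -- the unit
    refine ⟨1, le_rfl, fun c hc => ?_⟩
    have h1 : R.pow (R.e R.one) 1 = R.e R.one := FusionRing.one_mul3 R (R.e R.one)
    rw [h1] at hc
    have hco : c = R.one := by
      by_contra h
      exact hc (if_neg h)
    rw [hco]; exact hS.1
  · -- closed under star
    rintro a ⟨n, hn, ha⟩
    refine ⟨n, hn, fun c hc => ?_⟩
    rw [FusionRing.pow_star3 R hcomm] at hc
    have h1 : R.pow (R.e a) n (R.star c) ≠ 0 := hc
    have h2 := hS.2.1 _ (ha _ h1)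
    rwa [R.star_invol] at h2
  · -- closed under constituents of products
    rintro a ⟨m, hm, ha⟩ b ⟨n, hn, hb⟩ c hc
    set K := m * n with hK
    have hK1 : 1 ≤ K := Nat.one_le_iff_ne_zero.mpr
      (Nat.mul_ne_zero (by omega) (by omega))
    -- supports of the K-th powers of a and b lie in S
    have hpa0 : ∀ i, (0:ℝ) ≤ R.pow (R.e a) m i := FusionRing.pow_nonneg3 R (he_nonneg a) m
    have hpb0 : ∀ i, (0:ℝ) ≤ R.pow (R.e b) n i := FusionRing.pow_nonneg3 R (he_nonneg b) n
    have hsa : ∀ i, R.pow (R.e a) K i ≠ 0 → i ∈ S := by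
      intro i hi
      rw [hK, FusionRing.pow_mul3] at hi
      exact FusionRing.supp_pow3 R S hS hpa0 ha n i hi
    have hsb : ∀ i, R.pow (R.e b) K i ≠ 0 → i ∈ S := by
      intro i hi
      rw [hK, show m * n = n * m from Nat.mul_comm m n, FusionRing.pow_mul3] at hi
      exact FusionRing.supp_pow3 R S hS hpb0 hb m i hi
    -- support of (a·b)^K lies in S
    have hpaK0 : ∀ i, (0:ℝ) ≤ R.pow (R.e a) K i := FusionRing.pow_nonneg3 R (he_nonneg a) K
    have hpbK0 : ∀ i, (0:ℝ) ≤ R.pow (R.e b) K i := FusionRing.pow_nonneg3 R (he_nonneg b) K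
    have hz : ∀ i, R.pow (R.mul (R.e a) (R.e b)) K i ≠ 0 → i ∈ S := by
      intro i hi
      rw [FusionRing.pow_mul_pow R hcomm] at hi
      exact FusionRing.supp_mul3 R S hS hpaK0 hpbK0 hsa hsb i hi
    -- compare c^K with (a·b)^K
    set r : ℝ := (R.N a b c : ℝ) with hr
    have hrpos : 0 < r := by
      rw [hr]; exact_mod_cast hc
    set w : ι → ℝ := fun i => r * R.e c i with hw
    have hw0 : ∀ i, 0 ≤ w i := fun i => mul_nonneg hrpos.le (he_nonneg c i)
    have hwy : ∀ i, w i ≤ R.mul (R.e a) (R.e b) i := by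
      intro i
      rw [FusionRing.mul_e_e]
      show r * R.e c i ≤ (R.N a b i : ℝ)
      by_cases h : i = c
      · subst h
        show r * (if i = i then (1:ℝ) else 0) ≤ _
        rw [if_pos rfl, mul_one, hr]
      · show r * (if i = c then (1:ℝ) else 0) ≤ _
        rw [if_neg h, mul_zero]
        exact Nat.cast_nonneg _
    refine ⟨K, hK1, fun c'' hc'' => ?_⟩
    have hpos : 0 < R.pow (R.e c) K c'' :=
      lt_of_le_of_ne (FusionRing.pow_nonneg3 R (he_nonneg c) K c'') (Ne.symm hc'')
    have hwpos : 0 < R.pow w K c'' := by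
      rw [hw, FusionRing.pow_smul3]
      exact mul_pos (pow_pos hrpos K) hpos
    have hle : R.pow w K c'' ≤ R.pow (R.mul (R.e a) (R.e b)) K c'' :=
      FusionRing.pow_mono3 R hw0 hwy K c''
    exact hz c'' (ne_of_gt (lt_of_lt_of_le hwpos hle))
end
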